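/- Theorem 1 (characterization of the variant A³ of the q-Heun equation). Let a(x) = ∏_{n=1}^{3}(x − q^{h_n+1/2} t_n), c(x) = ∏_{n=1}^{3}(x − q^{l_n−1/2} t_n), and b(x) = b3 x³ + b2 x² + E x + b0 with b3, b2, b0, E ∈ ℂ, and denote by a2 and c2 the coefficients of x² in a(x) and c(x) respectively. Assume: (i) there exists a real number λ such that q^{−λ} a(0) + b0 + q^{λ} c(0) = 0 and q^{−λ−β} a(0) + b0 + q^{λ+β} c(0) = 0 (the exponents of the equation a(x)g(x/q) + b(x)g(x) + c(x)g(qx) = 0 at x = 0 differ by β); (ii) there exists a real number μ such that q^{μ} + b3 + q^{−μ} = 0 and q^{μ+1} + b3 + q^{−μ−1} = 0 (the exponents at x = ∞ differ by 1); (iii) for μ as in (ii), q^{μ} a2 + b2 + q^{−μ} c2 = 0 (the regular singularity x = ∞ is apparent). Then b3 = −(q^{1/2} + q^{−1/2}), b2 = Σ_{n=1}^{3} (q^{h_n} + q^{l_n}) t_n, and b0 = q^{(h1+h2+h3+l1+l2+l3)/2} (q^{β/2} + q^{−β/2}) t1 t2 t3; that is, the equation is the variant of the q-Heun equation (A³ −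 E)g = 0. -/

import Mathlib

noncomputable def qp (q r : ℝ) : ℂ := ((q ^ r : ℝ) : ℂ)

/-!
Both exponent conditions reduce to `q^x + q^{-x} = q^{x+d} + q^{-(x+d)}` with `d ≠ 0`; since
`u ↦ u + u⁻¹` takes each value only at `u` and `u⁻¹`, this forces `x = -d/2`. At infinity `d = 1`,
so `μ = -1/2`, which gives `b3` and, through the apparency condition, `b2`. At zero, writing
`a(0) = -q^α T` and `c(0) = -q^γ T` with `T = t1 t2 t3` and factoring out `q^{(α+γ)/2} T`, the
two conditions take this form with `x = (α-γ)/2 - λ` and `d = -β`, which gives `b0`.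
-/

open Polynomial

section qPower

variable {q : ℝ}

lemma qp_add (hq : 0 < q) (x y : ℝ) : qp q (x + y) = qp q x * qp q y := by
  simp only [qp, Real.rpow_add hq, Complex.ofReal_mul]

lemma qp_neg (hq : 0 < q) (x : ℝ) : qp q (-x) = (qp q x)⁻¹ := by
  simp only [qp, Real.rpow_neg hq.le, Complex.ofReal_inv]

lemma qp_zero : qp q 0 = 1 := by simp [qp]

lemma qp_ne_zero (hq : 0 < q) (x : ℝ) : qp q x ≠ 0 :=
  Complex.ofReal_ne_zero.mpr (Real.rpow_pos_of_pos hq x).ne'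

lemma qp_injective (hq : 0 < q) (hq1 : q ≠ 1) : Function.Injective (qp q) :=
  fun _ _ h => (Real.rpow_right_inj hq hq1).mp (Complex.ofReal_injective h)

lemma eq_or_eq_neg_of_qp_add_qp_neg_eq (hq : 0 < q) (hq1 : q ≠ 1) {x y : ℝ}
    (h : qp q x + qp q (-x) = qp q y + qp q (-y)) : x = y ∨ x = -y := by
  have hx := qp_ne_zero hq x
  have hy := qp_ne_zero hq y
  rw [qp_neg hq, qp_neg hq] at h
  have hfactor : (qp q x - qp q y) * (qp q x * qp q y - 1) = 0 := by
    field_simp at h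
    linear_combination h
  rcases mul_eq_zero.mp hfactor with hxy | hxy
  · exact Or.inl (qp_injective hq hq1 (sub_eq_zero.mp hxy))
  · have : qp q (x + y) = qp q 0 := by rw [qp_add hq, qp_zero]; exact sub_eq_zero.mp hxy
    exact Or.inr (by linarith [qp_injective hq hq1 this])

lemma eq_neg_half_of_qp_add_qp_neg_eq (hq : 0 < q) (hq1 : q ≠ 1) {x d : ℝ} (hd : d ≠ 0)
    (h : qp q x + qp q (-x) = qp q (x + d) + qp q (-(x + d))) : x = -(d / 2) := by
  rcases eq_or_eq_neg_of_qp_add_qp_neg_eq hq hq1 h with h' | h'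
  · exact absurd (by linarith) hd
  · linarith

end qPower

section Cubic

variable {R : Type*} [CommRing R]

lemma coeff_two_cubic_X_sub_C (r1 r2 r3 : R) :
    ((X - C r1) * (X - C r2) * (X - C r3)).coeff 2 = -(r1 + r2 + r3) := by
  have h : (X - C r1) * (X - C r2) * (X - C r3)
      = X ^ 3 - C (r1 + r2 + r3) * X ^ 2 + C (r1 * r2 + r1 * r3 + r2 * r3) * X
        - C (r1 * r2 * r3) := by
    simp only [C_add, C_mul]; ring
  rw [h]
  simp only [coeff_sub, coeff_add, coeff_C_mul, coeff_X_pow, coeff_X, coeff_C]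
  norm_num

lemma eval_zero_cubic_X_sub_C (r1 r2 r3 : R) :
    ((X - C r1) * (X - C r2) * (X - C r3)).eval 0 = -(r1 * r2 * r3) := by
  simp only [eval_mul, eval_sub, eval_X, eval_C]
  ring

end Cubic

lemma eval_zero_qp_cubic {q : ℝ} (hq : 0 < q) (x y z : ℝ) (t1 t2 t3 : ℂ) :
    ((X - C (qp q x * t1)) * (X - C (qp q y * t2)) * (X - C (qp q z * t3))).eval 0
      = -(qp q (x + y + z) * (t1 * t2 * t3)) := by
  rw [eval_zero_cubic_X_sub_C, qp_add hq, qp_add hq]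
  ring

lemma const_coeff_eq_of_exponents_at_zero {q : ℝ} (hq : 0 < q) (hq1 : q ≠ 1) {α γ lam β : ℝ}
    (hβ : β ≠ 0) {T b0 : ℂ}
    (h1 : qp q (-lam) * -(qp q α * T) + b0 + qp q lam * -(qp q γ * T) = 0)
    (h2 : qp q (-(lam + β)) * -(qp q α * T) + b0 + qp q (lam + β) * -(qp q γ * T) = 0) :
    b0 = qp q ((α + γ) / 2) * (qp q (β / 2) + qp q (-β / 2)) * T := by
  set m := qp q ((α + γ) / 2)
  set s := (α - γ) / 2 - lam
  have factor : ∀ u v w : ℝ, u + v = (α + γ) / 2 + w → qp q u * qp q v = m * qp q w := by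
    intro u v w huvw; rw [← qp_add hq, ← qp_add hq, huvw]
  have e1 := factor (-lam) α s (by ring)
  have e2 := factor lam γ (-s) (by ring)
  have e3 := factor (-(lam + β)) α (s + -β) (by ring)
  have e4 := factor (lam + β) γ (-(s + -β)) (by ring)
  have hb0 : b0 = m * T * (qp q s + qp q (-s)) := by
    linear_combination h1 + T * e1 + T * e2
  rcases eq_or_ne T 0 with hT | hT
  · simp [hb0, hT]
  have hs : s = -(-β / 2) := by
    refine eq_neg_half_of_qp_add_qp_neg_eq hq hq1 (neg_ne_zero.mpr hβ) ?_
    refine mul_left_cancel₀ (mul_ne_zero (qp_ne_zero hq _ : m ≠ 0) hT) ?_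
    linear_combination h2 - h1 - T * (e1 + e2 - e3 - e4)
  rw [hb0, hs, neg_div, neg_neg]
  ring

open Polynomial in
theorem stmt9_general (q h1 h2 h3 l1 l2 l3 β : ℝ) (hq : 0 < q) (hq1 : q ≠ 1) (hβ : β ≠ 0)
    (t1 t2 t3 : ℝ)
    (b3 b2 b0 : ℂ) (a c : Polynomial ℂ)
    (ha : a = (X - C (qp q (h1 + 1/2) * (t1 : ℂ))) * (X - C (qp q (h2 + 1/2) * (t2 : ℂ)))
        * (X - C (qp q (h3 + 1/2) * (t3 : ℂ))))
    (hc : c = (X - C (qp q (l1 - 1/2) * (t1 : ℂ))) * (X - C (qp q (l2 - 1/2) * (t2 : ℂ)))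
        * (X - C (qp q (l3 - 1/2) * (t3 : ℂ))))
    (hzero : ∃ lam : ℝ,
        qp q (-lam) * a.eval 0 + b0 + qp q lam * c.eval 0 = 0 ∧
        qp q (-(lam + β)) * a.eval 0 + b0 + qp q (lam + β) * c.eval 0 = 0)
    (hinf : ∃ μ : ℝ,
        (qp q μ + b3 + qp q (-μ) = 0 ∧ qp q (μ + 1) + b3 + qp q (-(μ + 1)) = 0) ∧
        qp q μ * a.coeff 2 + b2 + qp q (-μ) * c.coeff 2 = 0) :
    b3 = -(qp q (1/2) + qp q (-(1/2))) ∧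
    b2 = (qp q h1 + qp q l1) * (t1 : ℂ) + (qp q h2 + qp q l2) * (t2 : ℂ)
        + (qp q h3 + qp q l3) * (t3 : ℂ) ∧
    b0 = qp q ((h1 + h2 + h3 + l1 + l2 + l3) / 2) * (qp q (β / 2) + qp q (-β / 2))
        * (t1 : ℂ) * (t2 : ℂ) * (t3 : ℂ) := by
  obtain ⟨lam, hz1, hz2⟩ := hzero
  obtain ⟨μ, ⟨hi1, hi2⟩, hi3⟩ := hinf
  obtain rfl : μ = -(1 / 2) :=
    eq_neg_half_of_qp_add_qp_neg_eq hq hq1 one_ne_zero (by linear_combination hi1 - hi2)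
  rw [neg_neg] at hi1 hi3
  refine ⟨by linear_combination hi1, ?_, ?_⟩
  · rw [ha, hc, coeff_two_cubic_X_sub_C, coeff_two_cubic_X_sub_C] at hi3
    simp only [mul_neg, mul_add, ← mul_assoc, ← qp_add hq] at hi3
    ring_nf at hi3 ⊢
    linear_combination hi3
  · rw [ha, hc, eval_zero_qp_cubic hq, eval_zero_qp_cubic hq] at hz1 hz2
    rw [const_coeff_eq_of_exponents_at_zero hq hq1 hβ hz1 hz2]
    rw [show (h1 + 1/2 + (h2 + 1/2) + (h3 + 1/2) + (l1 - 1/2 + (l2 - 1/2) + (l3 - 1/2))) / 2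
      = (h1 + h2 + h3 + l1 + l2 + l3) / 2 by ring]
    ring

open Polynomial in
theorem stmt9 (q h1 h2 h3 l1 l2 l3 β : ℝ) (hq : 0 < q) (hq1 : q ≠ 1) (hβ : β ≠ 0)
    (t1 t2 t3 : ℝ) (ht1 : t1 ≠ 0) (ht2 : t2 ≠ 0) (ht3 : t3 ≠ 0)
    (b3 b2 b0 E : ℂ) (a c : Polynomial ℂ)
    (ha : a = (X - C (qp q (h1 + 1/2) * (t1 : ℂ))) * (X - C (qp q (h2 + 1/2) * (t2 : ℂ)))
        * (X - C (qp q (h3 + 1/2) * (t3 : ℂ))))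
    (hc : c = (X - C (qp q (l1 - 1/2) * (t1 : ℂ))) * (X - C (qp q (l2 - 1/2) * (t2 : ℂ)))
        * (X - C (qp q (l3 - 1/2) * (t3 : ℂ))))
    (hzero : ∃ lam : ℝ,
        qp q (-lam) * a.eval 0 + b0 + qp q lam * c.eval 0 = 0 ∧
        qp q (-(lam + β)) * a.eval 0 + b0 + qp q (lam + β) * c.eval 0 = 0)
    (hinf : ∃ μ : ℝ,
        (qp q μ + b3 + qp q (-μ) = 0 ∧ qp q (μ + 1) + b3 + qp q (-(μ + 1)) = 0) ∧
        qp q μ * a.coeff 2 + b2 + qp q (-μ) * c.coeff 2 = 0) :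
    b3 = -(qp q (1/2) + qp q (-(1/2))) ∧
    b2 = (qp q h1 + qp q l1) * (t1 : ℂ) + (qp q h2 + qp q l2) * (t2 : ℂ)
        + (qp q h3 + qp q l3) * (t3 : ℂ) ∧
    b0 = qp q ((h1 + h2 + h3 + l1 + l2 + l3) / 2) * (qp q (β / 2) + qp q (-β / 2))
        * (t1 : ℂ) * (t2 : ℂ) * (t3 : ℂ) :=
  stmt9_general q h1 h2 h3 l1 l2 l3 β hq hq1 hβ t1 t2 t3 b3 b2 b0 a c ha hc hzero hinf
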